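/- arXiv:1505.03820 — 2 statements merged into one kernel-verified Lean document; each statement's English description precedes it below -/
import Mathlib

section
/- Suppose (i, j) = (1, 2) or (i, j) = (2, 1), a_i > a_j, d_i > a_i, and ρ_i < 4K_j·a_j(a_i − a_j)(d_i − a_i)/(r_j(K_j·a_i − K_j·a_j + a_i)²), where r_1 = 1 and r_2 = r. Then Model (1) has no interior equilibrium: there is no point (x_1, y_1, x_2, y_2) with all four coordinates strictly positive at which all four right-hand sides of Model (1) vanish. -/
/-! When `aᵢ > aⱼ`, the predator equation of patch `i` at an equilibrium reads
`dᵢ - fᵢ = ρᵢ yⱼ (fᵢ - fⱼ)` with `fₖ = aₖxₖ/(1+xₖ) < aₖ`, so its left side exceeds `dᵢ - aᵢ`.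
On the prey nullcline of patch `j`, `yⱼ (aᵢ - fⱼ) = rⱼ(Kⱼ - xⱼ)(aᵢ + (aᵢ - aⱼ)xⱼ)/(Kⱼaⱼ)`, a
concave quadratic in `xⱼ` whose maximum `rⱼ(Kⱼaᵢ - Kⱼaⱼ + aᵢ)²/(4Kⱼaⱼ(aᵢ - aⱼ))` (AM-GM) makes
the right side smaller than `dᵢ - aᵢ` under the bound on `ρᵢ`. -/

noncomputable def holling (a x : ℝ) : ℝ := a * x / (1 + x)

section

variable {s a b K d ρ u v w z : ℝ}

lemma holling_lt (ha : 0 < a) (hu : 0 ≤ u) : holling a u < a := by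
  rw [holling, div_lt_iff₀ (by linarith)]
  linarith

lemma prey_nullcline (hw : 0 < w) (hK : K ≠ 0)
    (hprey : s * w * (1 - w / K) - b * w * z / (1 + w) = 0) :
    K * b * z = s * (K - w) * (1 + w) := by
  have h1w : 1 + w ≠ 0 := by positivity
  have h : w * (K * b * z - s * (K - w) * (1 + w)) = 0 := by
    field_simp at hprey
    linear_combination -hprey
  exact sub_eq_zero.mp ((mul_eq_zero.mp h).resolve_left hw.ne')

lemma predator_nullcline (hv : v ≠ 0)
    (hpred : a * u * v / (1 + u) - d * v +
      ρ * (a * u * v * z / (1 + u) - b * w * v * z / (1 + w)) = 0) :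
    holling a u - d + ρ * (z * (holling a u - holling b w)) = 0 := by
  refine (mul_eq_zero.mp ?_).resolve_left hv
  rw [holling, holling]
  linear_combination hpred

lemma mul_sub_holling_le (hs : 0 ≤ s) (hb : 0 < b) (hab : b < a) (hK : 0 < K) (hw : 0 ≤ w)
    (hprey : K * b * z = s * (K - w) * (1 + w)) :
    z * (a - holling b w) ≤ s * (K * a - K * b + a) ^ 2 / (4 * K * b * (a - b)) := by
  have hab' : 0 < a - b := sub_pos.mpr hab
  have h1w : 1 + w ≠ 0 := by positivity
  have hquad : z * (a - holling b w) * (4 * K * b * (a - b)) =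
      s * (4 * ((a - b) * (K - w)) * (a + (a - b) * w)) := by
    rw [holling]
    field_simp
    linear_combination (a + (a - b) * w) * hprey
  rw [le_div_iff₀ (by positivity), hquad]
  gcongr
  convert four_mul_le_sq_add ((a - b) * (K - w)) (a + (a - b) * w) using 2
  ring

lemma false_of_prey_predator_equilibrium (hs : 0 < s) (hb : 0 < b) (hab : b < a) (hK : 0 < K)
    (hρ : 0 ≤ ρ)
    (hρlt : ρ < 4 * K * b * (a - b) * (d - a) / (s * (K * a - K * b + a) ^ 2))
    (hu : 0 ≤ u) (hv : v ≠ 0) (hw : 0 < w) (hz : 0 ≤ z)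
    (hprey : s * w * (1 - w / K) - b * w * z / (1 + w) = 0)
    (hpred : a * u * v / (1 + u) - d * v +
      ρ * (a * u * v * z / (1 + u) - b * w * v * z / (1 + w)) = 0) :
    False := by
  have hab' : 0 < a - b := sub_pos.mpr hab
  have hfa : holling a u < a := holling_lt (hb.trans hab) hu
  have hpeak : 0 < K * a - K * b + a := by nlinarith [mul_pos hK hab']
  set B := s * (K * a - K * b + a) ^ 2 / (4 * K * b * (a - b)) with hB_def
  have hB : 0 < B := by positivity
  have hρB : ρ * B < d - a := by
    rw [← lt_div_iff₀ hB, hB_def, div_div_eq_mul_div]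
    exact hρlt.trans_eq (by ring)
  have hzB := mul_sub_holling_le (a := a) hs.le hb hab hK hw.le (prey_nullcline hw hK.ne' hprey)
  refine lt_irrefl (d - a) ?_
  calc d - a < d - holling a u := by linarith
    _ = ρ * (z * (holling a u - holling b w)) := by
      linear_combination -predator_nullcline hv hpred
    _ ≤ ρ * (z * (a - holling b w)) := by gcongr
    _ ≤ ρ * B := by gcongr
    _ < d - a := hρB

end

theorem model1_no_interior_equilibrium_asymmetric_general
    (r a1 a2 K1 K2 d1 d2 ρ1 ρ2 : ℝ)
    (hr : 0 < r) (ha1 : 0 < a1) (ha2 : 0 < a2) (hK1 : 0 < K1) (hK2 : 0 < K2)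
    (hρ1 : 0 ≤ ρ1) (hρ2 : 0 ≤ ρ2)
    (hcase :
      (a1 > a2 ∧ d1 > a1 ∧
        ρ1 < 4 * K2 * a2 * (a1 - a2) * (d1 - a1) /
              (r * (K2 * a1 - K2 * a2 + a1) ^ 2)) ∨
      (a2 > a1 ∧ d2 > a2 ∧
        ρ2 < 4 * K1 * a1 * (a2 - a1) * (d2 - a2) /
              (1 * (K1 * a2 - K1 * a1 + a2) ^ 2))) :
    ¬ ∃ x1 y1 x2 y2 : ℝ, 0 < x1 ∧ 0 < y1 ∧ 0 < x2 ∧ 0 < y2 ∧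
        x1 * (1 - x1 / K1) - a1 * x1 * y1 / (1 + x1) = 0 ∧
        a1 * x1 * y1 / (1 + x1) - d1 * y1 +
          ρ1 * (a1 * x1 * y1 * y2 / (1 + x1) - a2 * x2 * y1 * y2 / (1 + x2)) = 0 ∧
        r * x2 * (1 - x2 / K2) - a2 * x2 * y2 / (1 + x2) = 0 ∧
        a2 * x2 * y2 / (1 + x2) - d2 * y2 +
          ρ2 * (a2 * x2 * y1 * y2 / (1 + x2) - a1 * x1 * y1 * y2 / (1 + x1)) = 0 := by
  rintro ⟨x1, y1, x2, y2, hx1, hy1, hx2, hy2, hprey1, hpred1, hprey2, hpred2⟩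
  rcases hcase with ⟨ha, -, hρ⟩ | ⟨ha, -, hρ⟩
  · exact false_of_prey_predator_equilibrium hr ha2 ha hK2 hρ1 hρ hx1.le hy1.ne' hx2 hy2.le
      hprey2 hpred1
  · exact false_of_prey_predator_equilibrium one_pos ha1 ha hK1 hρ2 hρ hx2.le hy2.ne' hx1
      hy1.le (by linear_combination hprey1) (by linear_combination hpred2)

/-- **Nonexistence of interior equilibria of Model (1) (asymmetric predation
rates, small dispersal).**  Suppose `(i,j) = (1,2)` or `(i,j) = (2,1)`, with
`aᵢ > aⱼ`, `dᵢ > aᵢ` and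
`ρᵢ < 4Kⱼaⱼ(aᵢ − aⱼ)(dᵢ − aᵢ)/(rⱼ(Kⱼaᵢ − Kⱼaⱼ + aᵢ)²)` (where `r₁ = 1`,
`r₂ = r`).  Then Model (1) has no interior equilibrium. -/
theorem model1_no_interior_equilibrium_asymmetric
    (r a1 a2 K1 K2 d1 d2 ρ1 ρ2 : ℝ)
    (hr : 0 < r) (ha1 : 0 < a1) (ha2 : 0 < a2) (hK1 : 0 < K1) (hK2 : 0 < K2)
    (hd1 : 0 < d1) (hd2 : 0 < d2) (hρ1 : 0 ≤ ρ1) (hρ2 : 0 ≤ ρ2)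
    (hcase :
      (a1 > a2 ∧ d1 > a1 ∧
        ρ1 < 4 * K2 * a2 * (a1 - a2) * (d1 - a1) /
              (r * (K2 * a1 - K2 * a2 + a1) ^ 2)) ∨
      (a2 > a1 ∧ d2 > a2 ∧
        ρ2 < 4 * K1 * a1 * (a2 - a1) * (d2 - a2) /
              (1 * (K1 * a2 - K1 * a1 + a2) ^ 2))) :
    ¬ ∃ x1 y1 x2 y2 : ℝ, 0 < x1 ∧ 0 < y1 ∧ 0 < x2 ∧ 0 < y2 ∧
        x1 * (1 - x1 / K1) - a1 * x1 * y1 / (1 + x1) = 0 ∧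
        a1 * x1 * y1 / (1 + x1) - d1 * y1 +
          ρ1 * (a1 * x1 * y1 * y2 / (1 + x1) - a2 * x2 * y1 * y2 / (1 + x2)) = 0 ∧
        r * x2 * (1 - x2 / K2) - a2 * x2 * y2 / (1 + x2) = 0 ∧
        a2 * x2 * y2 / (1 + x2) - d2 * y2 +
          ρ2 * (a2 * x2 * y1 * y2 / (1 + x2) - a1 * x1 * y1 * y2 / (1 + x1)) = 0 :=
  model1_no_interior_equilibrium_asymmetric_general r a1 a2 K1 K2 d1 d2 ρ1 ρ2 hr ha1 ha2 hK1 hK2 hρ1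
    hρ2 hcase
end

section
/- Consider the three-dimensional subsystem x_1' = x_1(1 − x_1/K_1) − a_1x_1y_1/(1+x_1), y_1' = a_1x_1y_1/(1+x_1) − d_1y_1 + ρ_1(y_2 − y_1), y_2' = −d_2y_2 − ρ_2(y_2 − y_1), with a_1, K_1, d_1, d_2 > 0 and ρ_1, ρ_2 ≥ 0, and set d̂_1 = d_1 + ρ_1d_2/(d_2 + ρ_2). If a_1K_1/(1+K_1) < d̂_1 (equivalently μ̂_1 = d̂_1/(a_1 − d̂_1) > K_1 when a_1 > d̂_1), then the equilibrium (K_1, 0, 0) is globally asymptotically stable: every solution on [0, ∞) with x_1(0) > 0, y_1(0) ≥ 0, y_2(0) ≥ 0 satisfies (x_1(t), y_1(t), y_2(t)) → (K_1, 0, 0) as t → ∞. -/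
/-!
The prey stays positive, and the predator equations form a cooperative linear system, so the
nonnegative `(y₁, y₂)`-quadrant is invariant. Predation only slows the prey, so the logistic
bound gives `limsup x₁ ≤ K₁`; hence eventually `a₁x₁/(1+x₁) ≤ d̂₁ - δ` for some `δ > 0`.
Then `V = y₁ + c y₂` with `c = (ρ₁ + δ/2)/(d₂ + ρ₂)` satisfies `V' ≤ -(δ/2)(y₁ + y₂)`,
so `V` decays exponentially. Once `y₁ → 0`, the prey grows at a positive per-capita rate below any
level under `K₁`, which gives `liminf x₁ ≥ K₁`.
-/

open Filter Set Topology Real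

theorem le_mul_exp_of_deriv_le_mul {f f' : ℝ → ℝ} {a b K : ℝ}
    (hf : ∀ t ∈ Icc a b, HasDerivAt f (f' t) t) (hle : ∀ t ∈ Ico a b, f' t ≤ K * f t) :
    ∀ t ∈ Icc a b, f t ≤ f a * exp (K * (t - a)) := by
  intro t ht
  have := le_gronwallBound_of_liminf_deriv_right_le (ε := 0)
    (fun s hs => (hf s hs).continuousAt.continuousWithinAt)
    (fun s hs _ hr =>
      (hf s (Ico_subset_Icc_self hs)).hasDerivWithinAt.liminf_right_slope_le hr)
    le_rfl (by simpa using hle) t ht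
  rwa [gronwallBound_ε0] at this

theorem exists_first_zero {h : ℝ → ℝ} {a b : ℝ} (hab : a ≤ b) (hc : ContinuousOn h (Icc a b))
    (ha : 0 < h a) (hb : h b ≤ 0) : ∃ τ ∈ Ioc a b, h τ = 0 ∧ ∀ s ∈ Ico a τ, 0 < h s := by
  set S := Icc a b ∩ h ⁻¹' Iic 0
  have hS : IsClosed S := hc.preimage_isClosed_of_isClosed isClosed_Icc isClosed_Iic
  have hbdd : BddBelow S := ⟨a, fun s hs => hs.1.1⟩
  have hτ : sInf S ∈ S := hS.csInf_mem ⟨b, ⟨hab, le_rfl⟩, hb⟩ hbdd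
  have hbefore : ∀ s ∈ Ico a (sInf S), 0 < h s := fun s hs => by
    by_contra! hs0
    exact (csInf_le hbdd ⟨⟨hs.1, hs.2.le.trans hτ.1.2⟩, hs0⟩).not_gt hs.2
  have haτ : a < sInf S := hτ.1.1.lt_of_ne fun haS =>
    (show h a ≤ 0 from haS ▸ hτ.2).not_gt ha
  obtain ⟨c, hcI, hc0⟩ :=
    intermediate_value_Icc' haτ.le (hc.mono (Icc_subset_Icc_right hτ.1.2)) ⟨hτ.2, ha.le⟩
  have hcτ : c = sInf S :=
    le_antisymm hcI.2 (csInf_le hbdd ⟨⟨hcI.1, hcI.2.trans hτ.1.2⟩, hc0.le⟩)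
  exact ⟨sInf S, ⟨haτ, hτ.1.2⟩, hcτ ▸ hc0, hbefore⟩

theorem HasDerivAt.nonpos_of_le_left {g : ℝ → ℝ} {g' a τ : ℝ} (hg : HasDerivAt g g' τ)
    (haτ : a < τ) (hle : ∀ s ∈ Ioo a τ, g τ ≤ g s) : g' ≤ 0 := by
  refine le_of_tendsto (hasDerivAt_iff_tendsto_slope_left_right.1 hg).1 ?_
  filter_upwards [Ioo_mem_nhdsLT haτ] with s hs
  rw [slope_def_field]
  exact div_nonpos_of_nonneg_of_nonpos (sub_nonneg.2 (hle s hs)) (sub_nonpos.2 hs.2.le)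

theorem pos_of_hasDerivAt_mul {f g : ℝ → ℝ} {a : ℝ}
    (hf : ∀ t ≥ a, HasDerivAt f (f t * g t) t) (hg : ∀ t ≥ a, 0 ≤ f t → ContinuousAt g t)
    (ha : 0 < f a) {t : ℝ} (ht : a ≤ t) : 0 < f t := by
  by_contra! hft
  obtain ⟨τ, ⟨haτ, hτt⟩, hτ0, hbefore⟩ := exists_first_zero ht
    (fun s hs => (hf s hs.1).continuousAt.continuousWithinAt) ha hft
  have hnn : ∀ s ∈ Icc a τ, 0 ≤ f s := fun s hs =>
    hs.2.eq_or_lt.elim (fun h => h ▸ hτ0.ge) (fun h => (hbefore s ⟨hs.1, h⟩).le)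
  obtain ⟨M, hM⟩ := isCompact_Icc.exists_bound_of_continuousOn
    fun s hs => (hg s hs.1 (hnn s hs)).continuousWithinAt
  -- `f' = f g ≥ -M f` on `[a, τ]`, so Grönwall keeps `f τ` away from zero
  have := le_mul_exp_of_deriv_le_mul (f := -f) (K := -M) (fun s hs => (hf s hs.1).neg)
    (fun s hs => by
      have := abs_le.1 ((Real.norm_eq_abs _).symm.trans_le (hM s (Ico_subset_Icc_self hs)))
      simp only [Pi.neg_apply]
      nlinarith [hnn s (Ico_subset_Icc_self hs)]) τ ⟨haτ.le, le_rfl⟩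
  simp only [Pi.neg_apply, hτ0, neg_zero, neg_mul] at this
  linarith [mul_pos ha (exp_pos (-(M * (τ - a))))]

theorem le_of_deriv_nonpos_of_ge {f f' : ℝ → ℝ} {a B : ℝ}
    (hf : ∀ t ≥ a, HasDerivAt f (f' t) t) (hB : ∀ t ≥ a, B ≤ f t → f' t ≤ 0) (ha : f a ≤ B)
    {t : ℝ} (ht : a ≤ t) : f t ≤ B := by
  have hfence : ∀ r > 0, f t ≤ B + r * (t - a) := fun r hr =>
    image_le_of_deriv_right_lt_deriv_boundary (B := fun s => B + r * (s - a))
      (B' := fun _ => r)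
      (fun s hs => (hf s hs.1).continuousAt.continuousWithinAt)
      (fun s hs => (hf s hs.1).hasDerivWithinAt) (by simpa using ha)
      (fun s => by simpa using ((hasDerivAt_id s).sub_const a).const_mul r |>.const_add B)
      (fun s hs hfs => (hB s hs.1 (by nlinarith [hs.1])).trans_lt hr) ⟨ht, le_rfl⟩
  refine ge_of_tendsto (x := 𝓝[>] (0 : ℝ)) ?_ (eventually_nhdsWithin_of_forall hfence)
  simpa using ((tendsto_id (x := 𝓝 (0 : ℝ))).mul_const (t - a)).const_add B
    |>.mono_left nhdsWithin_le_nhds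

theorem ge_of_deriv_nonneg_of_le {f f' : ℝ → ℝ} {a B : ℝ}
    (hf : ∀ t ≥ a, HasDerivAt f (f' t) t) (hB : ∀ t ≥ a, f t ≤ B → 0 ≤ f' t) (ha : B ≤ f a)
    {t : ℝ} (ht : a ≤ t) : B ≤ f t :=
  neg_le_neg_iff.1 <| le_of_deriv_nonpos_of_ge (fun s hs => (hf s hs).neg)
    (fun s hs h => neg_nonpos.2 (hB s hs (neg_le_neg_iff.1 h))) (neg_le_neg ha) ht

theorem eventually_le_of_deriv_le_neg {f f' : ℝ → ℝ} {B δ : ℝ}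
    (hf : ∀ᶠ t in atTop, HasDerivAt f (f' t) t) (hδ : 0 < δ)
    (hB : ∀ᶠ t in atTop, B ≤ f t → f' t ≤ -δ) : ∀ᶠ t in atTop, f t ≤ B := by
  obtain ⟨a, ha⟩ := eventually_atTop.1 (hf.and hB)
  by_cases hex : ∃ T ≥ a, f T ≤ B
  · obtain ⟨T, haT, hfT⟩ := hex
    refine eventually_atTop.2 ⟨T, fun t ht => le_of_deriv_nonpos_of_ge
      (fun s hs => (ha s (haT.trans hs)).1) (fun s hs hBs => ?_) hfT ht⟩
    linarith [(ha s (haT.trans hs)).2 hBs]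
  · push Not at hex
    have hdec : ∀ t ≥ a, f t + δ * (t - a) ≤ f a := fun t ht =>
      le_of_deriv_nonpos_of_ge (f := fun s => f s + δ * (s - a)) (f' := fun s => f' s + δ)
        (fun s hs =>
          ((ha s hs).1.add (((hasDerivAt_id s).sub_const a).const_mul δ)).congr_deriv (by ring))
        (fun s hs _ => by linarith [(ha s hs).2 (hex s hs).le]) (by simp) ht
    have hT : a ≤ a + (f a - B) / δ := le_add_of_nonneg_right
      (div_nonneg (sub_nonneg.2 (hex a le_rfl).le) hδ.le)
    have := hdec _ hT
    rw [add_sub_cancel_left, mul_div_cancel₀ _ hδ.ne'] at this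
    linarith [hex _ hT]

theorem eventually_ge_of_deriv_ge_pos {f f' : ℝ → ℝ} {B δ : ℝ}
    (hf : ∀ᶠ t in atTop, HasDerivAt f (f' t) t) (hδ : 0 < δ)
    (hB : ∀ᶠ t in atTop, f t ≤ B → δ ≤ f' t) : ∀ᶠ t in atTop, B ≤ f t :=
  (eventually_le_of_deriv_le_neg (f := -f) (B := -B) (hf.mono fun _ h => h.neg) hδ
    (hB.mono fun _ h hle => neg_le_neg (h (neg_le_neg_iff.1 hle)))).mono
    fun _ h => neg_le_neg_iff.1 h

theorem eventually_ge_of_deriv_ge_mul {f f' : ℝ → ℝ} {B σ : ℝ}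
    (hf : ∀ᶠ t in atTop, HasDerivAt f (f' t) t) (hσ : 0 < σ) (hpos : ∀ᶠ t in atTop, 0 < f t)
    (hB : ∀ᶠ t in atTop, f t ≤ B → σ * f t ≤ f' t) : ∀ᶠ t in atTop, B ≤ f t := by
  rcases le_or_gt B 0 with hB0 | hB0
  · exact hpos.mono fun t ht => hB0.trans ht.le
  obtain ⟨a, ha⟩ := eventually_atTop.1 (hf.and (hpos.and hB))
  have hm : 0 < min (f a) B := lt_min (ha a le_rfl).2.1 hB0
  have hfloor : ∀ t ≥ a, min (f a) B ≤ f t := fun t ht =>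
    ge_of_deriv_nonneg_of_le (fun s hs => (ha s hs).1)
      (fun s hs hsm => (mul_pos hσ (ha s hs).2.1).le.trans
        ((ha s hs).2.2 (hsm.trans (min_le_right _ _))))
      (min_le_left _ _) ht
  exact eventually_ge_of_deriv_ge_pos hf (mul_pos hσ hm) <| eventually_atTop.2 ⟨a,
    fun t ht hfB => (mul_le_mul_of_nonneg_left (hfloor t ht) hσ.le).trans ((ha t ht).2.2 hfB)⟩

theorem tendsto_zero_of_deriv_le_neg_mul {f f' : ℝ → ℝ} {k : ℝ}
    (hf : ∀ᶠ t in atTop, HasDerivAt f (f' t) t) (hk : 0 < k)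
    (hle : ∀ᶠ t in atTop, f' t ≤ -k * f t) (hnn : ∀ᶠ t in atTop, 0 ≤ f t) :
    Tendsto f atTop (𝓝 0) := by
  obtain ⟨a, ha⟩ := eventually_atTop.1 (hf.and hle)
  have hbound : ∀ t ≥ a, f t ≤ f a * exp (-k * (t - a)) := fun t ht =>
    le_mul_exp_of_deriv_le_mul (fun s hs => (ha s hs.1).1) (fun s hs => (ha s hs.1).2)
      t ⟨ht, le_rfl⟩
  have hexp : Tendsto (fun t => -k * (t - a)) atTop atBot :=
    (tendsto_atTop_add_const_right _ (-a) tendsto_id).const_mul_atTop_of_neg (neg_lt_zero.2 hk)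
  refine squeeze_zero' hnn (eventually_atTop.2 ⟨a, hbound⟩) ?_
  simpa using (tendsto_exp_atBot.comp hexp).const_mul (f a)

theorem min_add_exp_pos_of_cooperative {u v u' v' : ℝ → ℝ} {a L ε : ℝ}
    (hu : ∀ t ≥ a, HasDerivAt u (u' t) t) (hv : ∀ t ≥ a, HasDerivAt v (v' t) t)
    (hu' : ∀ t ≥ a, u t ≤ 0 → u t ≤ v t → L * u t ≤ u' t)
    (hv' : ∀ t ≥ a, v t ≤ 0 → v t ≤ u t → L * v t ≤ v' t)
    (hua : 0 ≤ u a) (hva : 0 ≤ v a) (hε : 0 < ε) {t : ℝ} (ht : a ≤ t) :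
    0 < min (u t) (v t) + ε * exp ((L + 1) * (t - a)) := by
  set β : ℝ → ℝ := fun s => ε * exp ((L + 1) * (s - a))
  have hβ : ∀ s, HasDerivAt β ((L + 1) * β s) s := fun s =>
    ((((hasDerivAt_id s).sub_const a).const_mul (L + 1)).exp.const_mul ε).congr_deriv
      (by simp only [β, id]; ring)
  by_contra! hneg
  obtain ⟨τ, ⟨haτ, -⟩, hτ0, hbefore⟩ := exists_first_zero (h := fun s => min (u s) (v s) + β s)
    ht (fun s hs => ContinuousAt.continuousWithinAt <|
      ((hu s hs.1).continuousAt.min (hv s hs.1).continuousAt).add (hβ s).continuousAt)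
    (by simpa [β] using add_pos_of_nonneg_of_pos (le_min hua hva) hε) hneg
  have hβτ : 0 < β τ := by positivity
  -- at the first crossing of the barrier `-β`, the crossing component `p` would have
  -- `(p + β)' ≥ L p + (L + 1) β = β > 0` while `p + β` decreases to `0`
  have cross : ∀ {p p' : ℝ → ℝ}, HasDerivAt p (p' τ) τ → (p τ ≤ 0 → L * p τ ≤ p' τ) →
      p τ + β τ = 0 → (∀ s ∈ Ioo a τ, min (u s) (v s) ≤ p s) → False := by
    intro p p' hp hp' hpτ hmin
    have := (hp.add (hβ τ)).nonpos_of_le_left haτ fun s hs => by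
      show p τ + β τ ≤ p s + β s
      rw [hpτ]; linarith [hbefore s ⟨hs.1.le, hs.2⟩, hmin s hs]
    rw [show p τ = -β τ by linarith] at hp'
    linarith [hp' (by linarith)]
  rcases le_total (u τ) (v τ) with huv | hvu
  · exact cross (hu τ haτ.le) (fun h => hu' τ haτ.le h huv) (by simpa [huv] using hτ0)
      fun s _ => min_le_left _ _
  · exact cross (hv τ haτ.le) (fun h => hv' τ haτ.le h hvu) (by simpa [hvu] using hτ0)
      fun s _ => min_le_right _ _

theorem nonneg_of_cooperative {u v u' v' : ℝ → ℝ} {a L : ℝ}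
    (hu : ∀ t ≥ a, HasDerivAt u (u' t) t) (hv : ∀ t ≥ a, HasDerivAt v (v' t) t)
    (hu' : ∀ t ≥ a, u t ≤ 0 → u t ≤ v t → L * u t ≤ u' t)
    (hv' : ∀ t ≥ a, v t ≤ 0 → v t ≤ u t → L * v t ≤ v' t)
    (hua : 0 ≤ u a) (hva : 0 ≤ v a) {t : ℝ} (ht : a ≤ t) : 0 ≤ u t ∧ 0 ≤ v t := by
  have hE : 0 < exp ((L + 1) * (t - a)) := exp_pos _
  refine le_min_iff.1 <| le_of_forall_pos_lt_add fun ε hε => ?_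
  simpa [div_mul_cancel₀ _ hE.ne'] using
    min_add_exp_pos_of_cooperative hu hv hu' hv' hua hva (div_pos hε hE) ht

theorem exists_pos_eventually_holling_le_sub {a K D : ℝ} {x : ℝ → ℝ} (ha : 0 ≤ a)
    (hK : 0 < K) (hx : ∀ᶠ t in atTop, 0 ≤ x t) (hxlt : ∀ b > K, ∀ᶠ t in atTop, x t < b)
    (hD : a * K / (1 + K) < D) : ∃ δ > 0, ∀ᶠ t in atTop, a * x t / (1 + x t) ≤ D - δ := by
  have hcont : ContinuousAt (fun s => a * s / (1 + s)) K :=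
    (continuousAt_const.mul continuousAt_id).div (continuousAt_const.add continuousAt_id)
      (by positivity)
  obtain ⟨b, hbD, hKb⟩ := (((hcont.eventually (gt_mem_nhds hD)).filter_mono
    nhdsWithin_le_nhds).and (self_mem_nhdsWithin (s := Ioi K))).exists
  refine ⟨D - a * b / (1 + b), sub_pos.2 hbD, ?_⟩
  filter_upwards [hx, hxlt b hKb] with t hx0 hxb
  rw [sub_sub_cancel, div_le_div_iff₀ (by linarith) (by linarith [show K < b from hKb])]
  nlinarith [mul_nonneg ha (sub_nonneg.2 hxb.le)]

theorem lyapunov_deriv_le {a1 d1 d2 ρ1 ρ2 δ x y z : ℝ} (hd2 : 0 < d2) (hρ2 : 0 ≤ ρ2)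
    (hδ : 0 ≤ δ) (hy : 0 ≤ y)
    (hrate : a1 * x / (1 + x) ≤ d1 + ρ1 * d2 / (d2 + ρ2) - δ) :
    (a1 * x * y / (1 + x) - d1 * y + ρ1 * (z - y))
      + (ρ1 + δ / 2) / (d2 + ρ2) * (-(d2 * z) - ρ2 * (z - y)) ≤ -(δ / 2) * (y + z) := by
  have hP : 0 < d2 + ρ2 := by linarith
  set q := ρ2 / (d2 + ρ2)
  have hq : q ≤ 1 := div_le_one_of_le₀ (by linarith) hP.le
  have e1 : a1 * x * y / (1 + x) = a1 * x / (1 + x) * y := by ring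
  have e2 : (ρ1 + δ / 2) / (d2 + ρ2) * (-(d2 * z) - ρ2 * (z - y))
      = -(ρ1 + δ / 2) * z + (ρ1 + δ / 2) * q * y := by
    simp only [q]; field_simp; ring
  have e3 : ρ1 * d2 / (d2 + ρ2) = ρ1 - ρ1 * q := by simp only [q]; field_simp; ring
  rw [e1, e2]
  rw [e3] at hrate
  have hδy : 0 ≤ δ / 2 * y := by positivity
  nlinarith [mul_le_mul_of_nonneg_right hrate hy, mul_le_mul_of_nonneg_right hq hδy]

structure IsSubsystemSolution (a1 K1 d1 d2 ρ1 ρ2 : ℝ) (x1 y1 y2 : ℝ → ℝ) : Prop where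
  hasDerivAt_x1 : ∀ t ≥ 0, HasDerivAt x1
    (x1 t * (1 - x1 t / K1) - a1 * x1 t * y1 t / (1 + x1 t)) t
  hasDerivAt_y1 : ∀ t ≥ 0, HasDerivAt y1
    (a1 * x1 t * y1 t / (1 + x1 t) - d1 * y1 t + ρ1 * (y2 t - y1 t)) t
  hasDerivAt_y2 : ∀ t ≥ 0, HasDerivAt y2 (-(d2 * y2 t) - ρ2 * (y2 t - y1 t)) t

namespace IsSubsystemSolution

variable {a1 K1 d1 d2 ρ1 ρ2 : ℝ} {x1 y1 y2 : ℝ → ℝ}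

theorem x1_pos (hs : IsSubsystemSolution a1 K1 d1 d2 ρ1 ρ2 x1 y1 y2) (hx10 : 0 < x1 0) :
    ∀ t ≥ 0, 0 < x1 t := fun _ ht =>
  pos_of_hasDerivAt_mul (g := fun s => 1 - x1 s / K1 - a1 * y1 s / (1 + x1 s))
    (fun s hs' => (hs.hasDerivAt_x1 s hs').congr_deriv (by ring))
    (fun s hs' hx => by
      have hx1 := (hs.hasDerivAt_x1 s hs').continuousAt
      have hy1 := (hs.hasDerivAt_y1 s hs').continuousAt
      have : 1 + x1 s ≠ 0 := by linarith
      fun_prop (disch := assumption))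
    hx10 ht

theorem y1_y2_nonneg (hs : IsSubsystemSolution a1 K1 d1 d2 ρ1 ρ2 x1 y1 y2) (ha1 : 0 ≤ a1)
    (hd1 : 0 ≤ d1) (hd2 : 0 ≤ d2) (hρ1 : 0 ≤ ρ1) (hρ2 : 0 ≤ ρ2) (hx : ∀ t ≥ 0, 0 < x1 t)
    (hy10 : 0 ≤ y1 0) (hy20 : 0 ≤ y2 0) : ∀ t ≥ 0, 0 ≤ y1 t ∧ 0 ≤ y2 t := fun _ ht =>
  nonneg_of_cooperative (L := a1) hs.hasDerivAt_y1 hs.hasDerivAt_y2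
    (fun s hs' hy1 hy12 => by
      have hx1 := hx s hs'
      have hsplit : a1 * x1 s * y1 s / (1 + x1 s) = a1 * y1 s - a1 * y1 s / (1 + x1 s) := by
        field_simp; ring
      have : a1 * y1 s / (1 + x1 s) ≤ 0 :=
        div_nonpos_of_nonpos_of_nonneg (mul_nonpos_of_nonneg_of_nonpos ha1 hy1) (by linarith)
      nlinarith [mul_nonneg hd1 (neg_nonneg.2 hy1), mul_nonneg hρ1 (sub_nonneg.2 hy12)])
    (fun s _ hy2 hy21 => by
      nlinarith [mul_nonpos_of_nonneg_of_nonpos ha1 hy2, mul_nonneg hd2 (neg_nonneg.2 hy2),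
        mul_nonneg hρ2 (sub_nonneg.2 hy21)])
    hy10 hy20 ht

theorem eventually_x1_lt (hs : IsSubsystemSolution a1 K1 d1 d2 ρ1 ρ2 x1 y1 y2) (ha1 : 0 ≤ a1)
    (hK1 : 0 < K1) (hx : ∀ t ≥ 0, 0 < x1 t) (hy1 : ∀ t ≥ 0, 0 ≤ y1 t) {b : ℝ} (hb : K1 < b) :
    ∀ᶠ t in atTop, x1 t < b := by
  obtain ⟨c, hc, hcb⟩ := exists_between hb
  refine (eventually_le_of_deriv_le_neg (δ := c * (c - K1) / K1)
    ((eventually_ge_atTop 0).mono hs.hasDerivAt_x1)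
    (div_pos (mul_pos (hK1.trans hc) (sub_pos.2 hc)) hK1)
    ((eventually_ge_atTop 0).mono fun t ht hct => ?_)).mono fun t ht => by linarith
  have hpred : 0 ≤ a1 * x1 t * y1 t / (1 + x1 t) :=
    div_nonneg (mul_nonneg (mul_nonneg ha1 (hx t ht).le) (hy1 t ht)) (by linarith [hx t ht])
  have hlog : x1 t * (1 - x1 t / K1) = -(x1 t * (x1 t - K1) / K1) := by field_simp; ring
  have : c * (c - K1) / K1 ≤ x1 t * (x1 t - K1) / K1 :=
    div_le_div_of_nonneg_right (by nlinarith) hK1.le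
  linarith

theorem tendsto_y1_y2 (hs : IsSubsystemSolution a1 K1 d1 d2 ρ1 ρ2 x1 y1 y2) (ha1 : 0 ≤ a1)
    (hK1 : 0 < K1) (hd2 : 0 < d2) (hρ1 : 0 ≤ ρ1) (hρ2 : 0 ≤ ρ2)
    (hcond : a1 * K1 / (1 + K1) < d1 + ρ1 * d2 / (d2 + ρ2)) (hx : ∀ t ≥ 0, 0 < x1 t)
    (hy : ∀ t ≥ 0, 0 ≤ y1 t ∧ 0 ≤ y2 t) (hxlt : ∀ b > K1, ∀ᶠ t in atTop, x1 t < b) :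
    Tendsto y1 atTop (𝓝 0) ∧ Tendsto y2 atTop (𝓝 0) := by
  obtain ⟨δ, hδ, hrate⟩ := exists_pos_eventually_holling_le_sub ha1 hK1
    ((eventually_ge_atTop 0).mono fun t ht => (hx t ht).le) hxlt hcond
  set c := (ρ1 + δ / 2) / (d2 + ρ2)
  have hc : 0 < c := div_pos (by linarith) (by linarith)
  have hV : Tendsto (fun t => y1 t + c * y2 t) atTop (𝓝 0) := by
    refine tendsto_zero_of_deriv_le_neg_mul (k := δ / 2 / (1 + c))
      ((eventually_ge_atTop 0).mono fun t ht =>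
        (hs.hasDerivAt_y1 t ht).add ((hs.hasDerivAt_y2 t ht).const_mul c)) (by positivity) ?_
      ((eventually_ge_atTop 0).mono fun t ht =>
        add_nonneg (hy t ht).1 (mul_nonneg hc.le (hy t ht).2))
    filter_upwards [eventually_ge_atTop 0, hrate] with t ht hrt
    obtain ⟨hy1, hy2⟩ := hy t ht
    refine (lyapunov_deriv_le hd2 hρ2 hδ.le hy1 hrt).trans ?_
    rw [neg_mul, neg_mul, neg_le_neg_iff, div_mul_eq_mul_div, div_le_iff₀ (by positivity)]
    nlinarith [mul_nonneg hδ.le hy1, mul_nonneg (mul_nonneg hδ.le hc.le) hy2]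
  refine ⟨squeeze_zero' ((eventually_ge_atTop 0).mono fun t ht => (hy t ht).1)
    ((eventually_ge_atTop 0).mono fun t ht => ?_) hV,
    squeeze_zero' ((eventually_ge_atTop 0).mono fun t ht => (hy t ht).2)
    ((eventually_ge_atTop 0).mono fun t ht => ?_) (by simpa using hV.div_const c)⟩
  · linarith [mul_nonneg hc.le (hy t ht).2]
  · rw [le_div_iff₀ hc]; linarith [(hy t ht).1]

theorem eventually_lt_x1 (hs : IsSubsystemSolution a1 K1 d1 d2 ρ1 ρ2 x1 y1 y2) (ha1 : 0 ≤ a1)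
    (hK1 : 0 < K1) (hx : ∀ t ≥ 0, 0 < x1 t) (hy1 : ∀ t ≥ 0, 0 ≤ y1 t)
    (hy1lim : Tendsto y1 atTop (𝓝 0)) {b : ℝ} (hb : b < K1) : ∀ᶠ t in atTop, b < x1 t := by
  obtain ⟨c, hbc, hcK⟩ := exists_between (max_lt hb hK1)
  rw [max_lt_iff] at hbc
  set σ := (1 - c / K1) / 2 with hσ_def
  have hσ : 0 < σ := by linarith [(div_lt_one hK1).2 hcK]
  have hsmall : ∀ᶠ t in atTop, a1 * y1 t < σ := by
    simpa using (hy1lim.const_mul a1).eventually (gt_mem_nhds (by simpa using hσ))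
  refine (eventually_ge_of_deriv_ge_mul (B := c)
    ((eventually_ge_atTop 0).mono hs.hasDerivAt_x1) hσ ((eventually_ge_atTop 0).mono hx)
    ?_).mono fun t ht => hbc.1.trans_le ht
  filter_upwards [eventually_ge_atTop 0, hsmall] with t ht hyt hxc
  have hx1 := hx t ht
  have hpred : a1 * x1 t * y1 t / (1 + x1 t) ≤ σ * x1 t :=
    (div_le_self (mul_nonneg (mul_nonneg ha1 hx1.le) (hy1 t ht)) (by linarith)).trans
      (by nlinarith)
  have : x1 t / K1 ≤ c / K1 := div_le_div_of_nonneg_right hxc hK1.le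
  nlinarith [mul_le_mul_of_nonneg_left this hx1.le, hσ_def]

end IsSubsystemSolution

/-- **Global stability of `(K₁, 0, 0)` for the three-dimensional subsystem of
the classical two-patch model (2).**  If `a₁K₁/(1+K₁) < d̂₁`, where
`d̂₁ = d₁ + ρ₁d₂/(d₂ + ρ₂)`, then every solution of the subsystem with
`x₁(0) > 0`, `y₁(0) ≥ 0`, `y₂(0) ≥ 0` converges to `(K₁, 0, 0)` as `t → ∞`. -/
theorem subsystem_global_stability_predator_free
    (a1 K1 d1 d2 ρ1 ρ2 : ℝ)
    (ha1 : 0 < a1) (hK1 : 0 < K1) (hd1 : 0 < d1) (hd2 : 0 < d2)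
    (hρ1 : 0 ≤ ρ1) (hρ2 : 0 ≤ ρ2)
    (hcond : a1 * K1 / (1 + K1) < d1 + ρ1 * d2 / (d2 + ρ2))
    (x1 y1 y2 : ℝ → ℝ)
    (hx1 : ∀ t : ℝ, 0 ≤ t → HasDerivAt x1
      (x1 t * (1 - x1 t / K1) - a1 * x1 t * y1 t / (1 + x1 t)) t)
    (hy1 : ∀ t : ℝ, 0 ≤ t → HasDerivAt y1
      (a1 * x1 t * y1 t / (1 + x1 t) - d1 * y1 t + ρ1 * (y2 t - y1 t)) t)
    (hy2 : ∀ t : ℝ, 0 ≤ t → HasDerivAt y2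
      (-(d2 * y2 t) - ρ2 * (y2 t - y1 t)) t)
    (hx10 : 0 < x1 0) (hy10 : 0 ≤ y1 0) (hy20 : 0 ≤ y2 0) :
    Tendsto x1 atTop (nhds K1) ∧ Tendsto y1 atTop (nhds 0) ∧
      Tendsto y2 atTop (nhds 0) := by
  have hs : IsSubsystemSolution a1 K1 d1 d2 ρ1 ρ2 x1 y1 y2 := ⟨hx1, hy1, hy2⟩
  have hx := hs.x1_pos hx10
  have hy := hs.y1_y2_nonneg ha1.le hd1.le hd2.le hρ1 hρ2 hx hy10 hy20
  have hxlt : ∀ b > K1, ∀ᶠ t in atTop, x1 t < b := fun b hb =>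
    hs.eventually_x1_lt ha1.le hK1 hx (fun t ht => (hy t ht).1) hb
  obtain ⟨hy1lim, hy2lim⟩ := hs.tendsto_y1_y2 ha1.le hK1 hd2 hρ1 hρ2 hcond hx hy hxlt
  have hltx : ∀ b < K1, ∀ᶠ t in atTop, b < x1 t := fun b hb =>
    hs.eventually_lt_x1 ha1.le hK1 hx (fun t ht => (hy t ht).1) hy1lim hb
  exact ⟨tendsto_order.2 ⟨hltx, hxlt⟩, hy1lim, hy2lim⟩
end
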